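/- arXiv:1701.08733 — 2 statements merged into one kernel-verified Lean document; each statement's English description precedes it below -/
import Mathlib

section
/- The family (E(π_{(i,j)}·[a_{ij}]·X^j))_{(i,j)∈𝔛} is multipliable in R'[[X]] with respect to its coefficient-wise topology; write E_f(X) = ∏_{(i,j)∈𝔛} E(π_{(i,j)}·[a_{ij}]·X^j) = ∑_{k≥0} η_k·X^k with η_k ∈ R'. Then for every k ∈ ℤ_{≥0} one has v(η_k) ∈ {k/δ, ∞}; in particular v(η_k) → ∞ as k → ∞. -/
open PowerSeries

noncomputable section

open scoped Classical

/-- The series ℓ(T) = ∑_{i≥0} T^{p^i}/p^i over ℚ. -/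
def lseries (p : ℕ) : PowerSeries ℚ :=
  PowerSeries.mk fun n => if ∃ i : ℕ, n = p ^ i then (n : ℚ)⁻¹ else 0

/-- Substitution `f(g)` of a power series `g` with zero constant coefficient
into a power series `f`. -/
def psComp {R : Type*} [CommSemiring R] (g f : PowerSeries R) : PowerSeries R :=
  PowerSeries.mk fun n =>
    ∑ k ∈ Finset.range (n + 1), PowerSeries.coeff k f * PowerSeries.coeff n (g ^ k)

/-- The Artin–Hasse exponential E(T) = exp(∑ T^{p^i}/p^i) over ℚ. -/
def artinHasse (p : ℕ) : PowerSeries ℚ := psComp (lseries p) (PowerSeries.exp ℚ)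

/-- The property that `Ep` is the Artin–Hasse exponential regarded as a power
series with coefficients in `ℤ_p`. -/
def IsArtinHasseZp (p : ℕ) [Fact p.Prime] (Ep : PowerSeries ℤ_[p]) : Prop :=
  PowerSeries.map (PadicInt.Coe.ringHom) Ep
    = PowerSeries.map (Rat.castHom ℚ_[p]) (artinHasse p)

/-- The index set 𝔛. -/
def Xfrak (p m dm : ℕ) : Set (ℕ × ℕ) :=
  {x | x.2 * p ^ m ≤ dm * p ^ x.1 ∧ ¬(0 < x.2 ∧ p ∣ x.2)}

/-- The valuation v, with v(π_{(i,j)}) = j/δ = j·p^m/d_m. -/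
def vR {A : Type*} [CommSemiring A] (p m dm : ℕ)
    (r : MvPowerSeries (Xfrak p m dm) A) : WithTop ℚ :=
  if r = 0 then ⊤
  else (((sInf {w : ℕ | ∃ u : (Xfrak p m dm) →₀ ℕ,
      MvPowerSeries.coeff u r ≠ 0 ∧ w = u.sum fun x k => x.1.2 * k} : ℕ) : ℚ)
    * (p : ℚ) ^ m / (dm : ℚ) : ℚ)

/-- ℤ_q = W(𝔽_q), the p-typical Witt vectors of 𝔽_q = GaloisField p a. -/
abbrev Zq (p a : ℕ) [Fact p.Prime] := WittVector p (GaloisField p a)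

/-- The inclusion ℤ_p = W(𝔽_p) → ℤ_q = W(𝔽_q). -/
def padicToZq (p a : ℕ) [Fact p.Prime] : ℤ_[p] →+* Zq p a :=
  (WittVector.map (algebraMap (ZMod p) (GaloisField p a))).comp
    (WittVector.equiv p).symm.toRingHom

/-- ℤ_q carries the discrete topology. -/
instance ZqTopology (p a : ℕ) [Fact p.Prime] : TopologicalSpace (Zq p a) := ⊥

/-- Multivariate power series carry the product (coefficient-wise) topology. -/
instance MvPowerSeries.topologicalSpace {σ R : Type*} [TopologicalSpace R] :
    TopologicalSpace (MvPowerSeries σ R) :=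
  inferInstanceAs (TopologicalSpace ((σ →₀ ℕ) → R))

/-- Substitution `f(g)` of a multivariate power series `g` with zero constant
coefficient into a one-variable power series `f`. -/
def psSubst {σ A : Type*} [CommRing A] (g : MvPowerSeries σ A) (f : PowerSeries A) :
    MvPowerSeries σ A :=
  fun u => ∑ k ∈ Finset.range ((u.sum fun _ c => c) + 1),
    PowerSeries.coeff k f * MvPowerSeries.coeff u (g ^ k)

variable (p a m dm : ℕ) [Fact p.Prime]

/-- `R'[[X]]`, regarded as the ring of formal power series over ℤ_q in the
variables {π_x : x ∈ 𝔛} ∪ {X}: the variable `some x` is π_x, and `none` is X. -/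
abbrev BigB := MvPowerSeries (Option (Xfrak p m dm)) (Zq p a)

/-- The factor E(π_{(i,j)}·[a_{ij}]·X^j) of E_f, an element of `R'[[X]]`. -/
def EfFactor (aa : Xfrak p m dm → GaloisField p a) (Ep : PowerSeries ℤ_[p])
    (x : Xfrak p m dm) : BigB p a m dm :=
  psSubst
    (MvPowerSeries.C (σ := Option (Xfrak p m dm)) (R := Zq p a) (WittVector.teichmuller p (aa x))
      * MvPowerSeries.X (some x) * MvPowerSeries.X none ^ x.1.2)
    (PowerSeries.map (padicToZq p a) Ep)

/-- E_f = ∏_{(i,j)∈𝔛} E(π_{(i,j)}·[a_{ij}]·X^j). -/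
def Ef (aa : Xfrak p m dm → GaloisField p a) (Ep : PowerSeries ℤ_[p]) : BigB p a m dm :=
  ∏' x : Xfrak p m dm, EfFactor p a m dm aa Ep x

/-- The coefficient η_k ∈ R' of X^k in an element of `R'[[X]]`. -/
def xCoeff (g : BigB p a m dm) (k : ℕ) : MvPowerSeries (Xfrak p m dm) (Zq p a) :=
  fun u => MvPowerSeries.coeff (R := Zq p a) (Finsupp.mapDomain some u + Finsupp.single none k) g

/-! Each factor `E(π_x [a_x] X^j)` is a power series in the single monomial `π_x X^j`.
Hence it is `1` modulo `π_x`, so the coefficient of a monomial in a partial product stops changing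
once the product contains the finitely many factors whose variable `π_x` occurs in that monomial:
the product converges coefficientwise. Moreover, for the grading `deg π_(i,j) = j`, `deg X = -1`,
every monomial of every factor has degree `0`; such series form a closed submonoid, which
therefore contains the infinite product. So every monomial `π^u` of `η_k` has `∑ j·u(i,j) = k`,
and `η_k` is either zero or of valuation exactly `k/δ`. -/

namespace MvPowerSeries

variable {σ R : Type*} [CommSemiring R]

theorem coeff_mul_eq_of_coeff_eq_of_le {f f' : MvPowerSeries σ R} (g : MvPowerSeries σ R)
    {w : σ →₀ ℕ} (h : ∀ v ≤ w, coeff v f = coeff v f') :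
    coeff w (f * g) = coeff w (f' * g) := by
  rw [coeff_mul, coeff_mul]
  refine Finset.sum_congr rfl fun uv huv => ?_
  rw [h uv.1 (Finset.HasAntidiagonal.mem_antidiagonal.mp huv ▸ le_self_add)]

theorem coeff_prod_eq_coeff_one_of_le {ι : Type*} (f : ι → MvPowerSeries σ R) (U : Finset ι)
    {w : σ →₀ ℕ} (h : ∀ i ∈ U, ∀ v ≤ w, coeff v (f i) = coeff v 1) :
    ∀ v ≤ w, coeff v (∏ i ∈ U, f i) = coeff v 1 := by
  induction U using Finset.induction_on with
  | empty => simp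
  | insert j U hj ih =>
    intro v hv
    rw [Finset.prod_insert hj, coeff_mul_eq_of_coeff_eq_of_le _
      fun u hu => h j (Finset.mem_insert_self j U) u (hu.trans hv), one_mul,
      ih (fun i hi => h i (Finset.mem_insert_of_mem hi)) v hv]

theorem multipliable_of_coeff_eq_coeff_one [TopologicalSpace R] {ι : Type*}
    (f : ι → MvPowerSeries σ R) (s : ι → σ) (hs : Function.Injective s)
    (hf : ∀ i v, v (s i) = 0 → coeff v (f i) = coeff v 1) : Multipliable f := by
  let F : (σ →₀ ℕ) → Finset ι := fun w => w.support.preimage s hs.injOn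
  refine ⟨fun w => coeff w (∏ i ∈ F w, f i), ?_⟩
  unfold HasProd; rw [SummationFilter.unconditional_filter]
  refine tendsto_pi_nhds.mpr fun w => (Filter.tendsto_pure.mpr ?_).mono_right (pure_le_nhds _)
  filter_upwards [Filter.eventually_ge_atTop (F w)] with T hT
  have hfar : ∀ i ∈ T \ F w, ∀ v ≤ w, coeff v (f i) = coeff v 1 := fun i hi v hv =>
    hf i v <| Nat.eq_zero_of_le_zero <| (hv (s i)).trans_eq <| by
      simpa [F] using (Finset.mem_sdiff.mp hi).2
  change coeff w (∏ i ∈ T, f i) = coeff w (∏ i ∈ F w, f i)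
  rw [← Finset.prod_sdiff hT, coeff_mul_eq_of_coeff_eq_of_le _
    (coeff_prod_eq_coeff_one_of_le f _ hfar), one_mul]

variable {M : Type*} [AddCommMonoid M]

def weightZero (wt : σ → M) : Submonoid (MvPowerSeries σ R) where
  carrier := {f | ∀ d, coeff d f ≠ 0 → Finsupp.weight wt d = 0}
  one_mem' d hd := by
    rw [coeff_one] at hd
    rw [show d = 0 by by_contra h; simp [h] at hd, map_zero]
  mul_mem' {f g} hf hg d hd := by
    rw [coeff_mul] at hd
    obtain ⟨uv, huv, hne⟩ := Finset.exists_ne_zero_of_sum_ne_zero hd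
    rw [← Finset.HasAntidiagonal.mem_antidiagonal.mp huv, map_add, hf _ (left_ne_zero_of_mul hne),
      hg _ (right_ne_zero_of_mul hne), add_zero]

theorem isClosed_weightZero [TopologicalSpace R] [T1Space R] (wt : σ → M) :
    IsClosed (weightZero (R := R) wt : Set (MvPowerSeries σ R)) := by
  have : (weightZero (R := R) wt : Set (MvPowerSeries σ R)) =
      ⋂ d ∈ {d : σ →₀ ℕ | Finsupp.weight wt d ≠ 0}, (fun f => coeff d f) ⁻¹' {0} := by
    ext f
    simp only [SetLike.mem_coe, weightZero, Submonoid.mem_mk, Subsemigroup.mem_mk,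
      Set.mem_iInter, Set.mem_preimage, Set.mem_singleton_iff]
    exact forall_congr' fun d => not_imp_comm
  rw [this]
  exact isClosed_biInter fun d _ => isClosed_singleton.preimage (continuous_apply d)

end MvPowerSeries

section psSubst

variable {σ A : Type*} [CommRing A]

theorem coeff_psSubst (g : MvPowerSeries σ A) (f : PowerSeries A) (u : σ →₀ ℕ) :
    MvPowerSeries.coeff u (psSubst g f) = ∑ k ∈ Finset.range ((u.sum fun _ c => c) + 1),
      PowerSeries.coeff k f * MvPowerSeries.coeff u (g ^ k) :=
  rfl

theorem coeff_zero_psSubst (g : MvPowerSeries σ A) (f : PowerSeries A) :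
    MvPowerSeries.coeff 0 (psSubst g f) = PowerSeries.coeff 0 f := by
  simp [coeff_psSubst]

theorem exists_eq_nsmul_of_coeff_psSubst_monomial_ne_zero (e : σ →₀ ℕ) (c : A)
    (f : PowerSeries A) {v : σ →₀ ℕ}
    (h : MvPowerSeries.coeff v (psSubst (MvPowerSeries.monomial e c) f) ≠ 0) :
    ∃ k : ℕ, v = k • e := by
  rw [coeff_psSubst] at h
  obtain ⟨k, -, hk⟩ := Finset.exists_ne_zero_of_sum_ne_zero h
  rw [MvPowerSeries.monomial_pow, MvPowerSeries.coeff_monomial] at hk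
  exact ⟨k, by_contra fun hne => hk (by rw [if_neg hne, mul_zero])⟩

end psSubst

theorem IsArtinHasseZp.coeff_zero {Ep : PowerSeries ℤ_[p]} (hEp : IsArtinHasseZp p Ep) :
    PowerSeries.coeff 0 Ep = 1 := by
  have h := congrArg (PowerSeries.coeff 0) hEp
  simp only [PowerSeries.coeff_map, artinHasse, psComp, PowerSeries.coeff_mk] at h
  simp only [zero_add, Finset.range_one, Finset.sum_singleton, pow_zero, PowerSeries.coeff_one,
    PowerSeries.coeff_exp, if_true, mul_one, Nat.factorial_zero, Nat.cast_one, div_one,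
    map_one] at h
  exact (map_eq_one_iff _ Subtype.val_injective).mp h

theorem vR_eq_or_eq_top {p m dm : ℕ} {A : Type*} [CommSemiring A]
    (r : MvPowerSeries (Xfrak p m dm) A) (k : ℕ)
    (hr : ∀ u, MvPowerSeries.coeff u r ≠ 0 → (u.sum fun x c => x.1.2 * c) = k) :
    vR p m dm r = (((k : ℚ) * (p : ℚ) ^ m / (dm : ℚ) : ℚ) : WithTop ℚ) ∨ vR p m dm r = ⊤ := by
  by_cases h0 : r = 0
  · exact Or.inr (if_pos h0)
  obtain ⟨u, hu⟩ : ∃ u, MvPowerSeries.coeff u r ≠ 0 := by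
    by_contra! h
    exact h0 (MvPowerSeries.ext h)
  refine Or.inl ?_
  rw [vR, if_neg h0]
  have hset : {w : ℕ | ∃ u : Xfrak p m dm →₀ ℕ,
      MvPowerSeries.coeff u r ≠ 0 ∧ w = u.sum fun x c => x.1.2 * c} = {k} := by
    ext w
    refine ⟨fun ⟨v, hv, hw⟩ => hw.trans (hr v hv), fun hw => ⟨u, hu, ?_⟩⟩
    rw [Set.mem_singleton_iff.mp hw, hr u hu]
  rw [hset, csInf_singleton]

instance : DiscreteTopology (Zq p a) := ⟨rfl⟩

def xfrakWeight : Option (Xfrak p m dm) → ℤ := fun o => o.elim (-1) fun x => (x.1.2 : ℤ)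

section

variable {p a m dm}

theorem EfFactor_eq (aa : Xfrak p m dm → GaloisField p a) (Ep : PowerSeries ℤ_[p])
    (x : Xfrak p m dm) :
    EfFactor p a m dm aa Ep x = psSubst (MvPowerSeries.monomial
      (Finsupp.single (some x) 1 + Finsupp.single none x.1.2) (WittVector.teichmuller p (aa x)))
      (PowerSeries.map (padicToZq p a) Ep) := by
  rw [EfFactor, MvPowerSeries.X_def, MvPowerSeries.X_pow_eq,
    ← MvPowerSeries.monomial_zero_eq_C_apply, MvPowerSeries.monomial_mul_monomial,
    MvPowerSeries.monomial_mul_monomial, zero_add, mul_one, mul_one]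

theorem coeff_EfFactor_of_apply_eq_zero (aa : Xfrak p m dm → GaloisField p a)
    {Ep : PowerSeries ℤ_[p]} (hEp : IsArtinHasseZp p Ep) (x : Xfrak p m dm)
    (v : Option (Xfrak p m dm) →₀ ℕ) (hv : v (some x) = 0) :
    MvPowerSeries.coeff v (EfFactor p a m dm aa Ep x) = MvPowerSeries.coeff v 1 := by
  rcases eq_or_ne v 0 with rfl | hv0
  · rw [EfFactor_eq, coeff_zero_psSubst, PowerSeries.coeff_map, hEp.coeff_zero, map_one,
      MvPowerSeries.coeff_zero_one]
  · rw [MvPowerSeries.coeff_one, if_neg hv0]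
    by_contra hne
    obtain ⟨k, rfl⟩ := exists_eq_nsmul_of_coeff_psSubst_monomial_ne_zero _ _ _
      (EfFactor_eq aa Ep x ▸ hne)
    simp_all

theorem EfFactor_mem_weightZero (aa : Xfrak p m dm → GaloisField p a) (Ep : PowerSeries ℤ_[p])
    (x : Xfrak p m dm) :
    EfFactor p a m dm aa Ep x ∈ MvPowerSeries.weightZero (xfrakWeight p m dm) := by
  intro v hv
  obtain ⟨k, rfl⟩ := exists_eq_nsmul_of_coeff_psSubst_monomial_ne_zero _ _ _
    (EfFactor_eq aa Ep x ▸ hv)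
  rw [map_nsmul, map_add, Finsupp.weight_single, Finsupp.weight_single]
  simp [xfrakWeight]

theorem multipliable_EfFactor (aa : Xfrak p m dm → GaloisField p a) {Ep : PowerSeries ℤ_[p]}
    (hEp : IsArtinHasseZp p Ep) : Multipliable (EfFactor p a m dm aa Ep) :=
  MvPowerSeries.multipliable_of_coeff_eq_coeff_one _ some (Option.some_injective _)
    (coeff_EfFactor_of_apply_eq_zero aa hEp)

theorem Ef_mem_weightZero (aa : Xfrak p m dm → GaloisField p a) (Ep : PowerSeries ℤ_[p]) :
    Ef p a m dm aa Ep ∈ MvPowerSeries.weightZero (xfrakWeight p m dm) :=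
  tprod_mem (MvPowerSeries.isClosed_weightZero _) (EfFactor_mem_weightZero aa Ep)

theorem sum_eq_of_coeff_xCoeff_ne_zero {g : BigB p a m dm}
    (hg : g ∈ MvPowerSeries.weightZero (xfrakWeight p m dm)) {k : ℕ} {u : Xfrak p m dm →₀ ℕ}
    (hu : MvPowerSeries.coeff u (xCoeff p a m dm g k) ≠ 0) :
    (u.sum fun x c => x.1.2 * c) = k := by
  have h := hg _ hu
  rw [map_add, Finsupp.weight_single, Finsupp.weight_apply,
    Finsupp.sum_mapDomain_index (by simp) (fun _ _ _ => add_smul _ _ _)] at h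
  simp only [xfrakWeight, Option.elim_some, Option.elim_none, nsmul_eq_mul', Finsupp.sum] at h
  zify
  simp only [Finsupp.sum]
  linarith

end

theorem statement13 (hdm : 1 ≤ dm)
    (aa : Xfrak p m dm → GaloisField p a)
    (Ep : PowerSeries ℤ_[p]) (hEp : IsArtinHasseZp p Ep) :
    Multipliable (EfFactor p a m dm aa Ep)
    ∧ (∀ k : ℕ,
        vR p m dm (xCoeff p a m dm (Ef p a m dm aa Ep) k)
            = (((k : ℚ) * (p : ℚ) ^ m / (dm : ℚ) : ℚ) : WithTop ℚ)
        ∨ vR p m dm (xCoeff p a m dm (Ef p a m dm aa Ep) k) = ⊤)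
    ∧ (∀ N : ℚ, ∃ K0 : ℕ, ∀ k : ℕ, K0 ≤ k →
        (N : WithTop ℚ) ≤ vR p m dm (xCoeff p a m dm (Ef p a m dm aa Ep) k)) := by
  have hv := fun k : ℕ => vR_eq_or_eq_top (xCoeff p a m dm (Ef p a m dm aa Ep) k) k
    fun _ hu => sum_eq_of_coeff_xCoeff_ne_zero (Ef_mem_weightZero aa Ep) hu
  refine ⟨multipliable_EfFactor aa hEp, hv, fun N => ⟨⌈N * dm⌉₊, fun k hk => ?_⟩⟩
  rcases hv k with h | h
  · rw [h, WithTop.coe_le_coe, le_div_iff₀ (by exact_mod_cast hdm)]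
    calc N * dm ≤ k := (Nat.le_ceil _).trans (by exact_mod_cast hk)
      _ ≤ k * (p : ℚ) ^ m := le_mul_of_one_le_right k.cast_nonneg
        (one_le_pow₀ (by exact_mod_cast (Fact.out : p.Prime).one_le))
  · exact h ▸ le_top

end
end

section
/- For every integer n ≥ 1 and every r ∈ R one has v_{π_n}(ev_n(r)) ≥ v(r). -/
/-!
Write `t = ‖ζ - 1‖`. The product of `1 - η` over the primitive `p^n`-th roots of unity `η` is
`Φ_{p^n}(1) = p`, and all factors have the same norm, so `t^{φ(p^n)} = ‖p‖`.

Next, `‖π_i(π_n)‖ ≤ t^{p^i}`. For `i ≥ n`, `π_i(T) = π_{i-n}((1+T)^{p^n} - 1)` (both sides have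
the same image under `E`, and composition with `E` is injective), and `(1 + π_n)^{p^n} = 1`, so
`π_i(π_n) = 0`. For `i < n`, reducing `E(π_i) = (1+T)^{p^i} = 1 + T^{p^i}` modulo `p` shows
`π_i ≡ π_0(T^{p^i})`, so every term of the series `π_i(π_n)` has norm at most `t^{p^i}` or at most
`‖p‖ = t^{φ(p^n)} ≤ t^{p^i}`.

On `𝔛` one has `j/δ ≤ p^i`, hence every monomial of `ev_n(r)` has norm at most `t^{v(r)}`, and by
the ultrametric inequality so has `ev_n(r)`. Since `t^{φ(p^n)} = ‖p‖` and `v(p) = 1`, this is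
`v_{π_n}(ev_n(r)) ≥ v(r)`.
-/

open PowerSeries

noncomputable section

open scoped Classical

/-- The property that `πfam i` is the power series `π_i(T) ∈ T·ℤ_p[[T]]` with
`E(π_i(T)) = (1+T)^{p^i}`. -/
def IsPiFamily (p : ℕ) [Fact p.Prime] (Ep : PowerSeries ℤ_[p])
    (πfam : ℕ → PowerSeries ℤ_[p]) : Prop :=
  ∀ i : ℕ, PowerSeries.constantCoeff (πfam i) = 0
    ∧ psComp (πfam i) Ep = (1 + X) ^ p ^ i

/-- The convergent evaluation π_i(π_n) ∈ 𝒪_n ⊆ K_n at π_n = ζ_{p^n} − 1. -/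
def piEval (p : ℕ) [Fact p.Prime] (πfam : ℕ → PowerSeries ℤ_[p])
    (K : Type*) [NormedField K] [Algebra ℚ_[p] K] (ζ : K) (i : ℕ) : K :=
  ∑' j : ℕ,
    algebraMap ℚ_[p] K (PadicInt.Coe.ringHom (PowerSeries.coeff j (πfam i))) * (ζ - 1) ^ j

/-- The evaluation map ev_n : R → 𝒪_n, the ℤ_p-algebra homomorphism determined by
π_{(i,j)} ↦ π_i(π_n), given by the convergent sum over all monomials. -/
def evn (p m dm : ℕ) [Fact p.Prime] (πfam : ℕ → PowerSeries ℤ_[p])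
    (K : Type*) [NormedField K] [Algebra ℚ_[p] K] (ζ : K)
    (r : MvPowerSeries (Xfrak p m dm) ℤ_[p]) : K :=
  ∑' u : (Xfrak p m dm) →₀ ℕ,
    algebraMap ℚ_[p] K (PadicInt.Coe.ringHom (MvPowerSeries.coeff u r))
      * (u.prod fun x k => (piEval p πfam K ζ x.1.1) ^ k)

/-- The normalization v_{π_n} = p^{n−1}(p−1)·v_p, so that v_{π_n}(π_n) = 1. -/
def vpin (p n : ℕ) {K : Type*} (v : K → WithTop ℚ) (y : K) : WithTop ℚ :=
  (((p : ℚ) ^ (n - 1) * ((p : ℚ) - 1) : ℚ) : WithTop ℚ) * v y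

open Finset Filter Topology

namespace ArtinHasseEval

section Subst

variable {R : Type*} [CommRing R]

theorem coeff_pow_eq_zero_of_lt {g : R⟦X⟧} (hg : constantCoeff g = 0) {j d : ℕ} (h : j < d) :
    coeff j (g ^ d) = 0 := by
  have : (X : R⟦X⟧) ^ d ∣ g ^ d := pow_dvd_pow_of_dvd (X_dvd_iff.mpr hg) d
  exact (X_pow_dvd_iff.mp this) j h

theorem coeff_subst_eq_sum_range {g : R⟦X⟧} (hg : constantCoeff g = 0) (f : R⟦X⟧)
    {j N : ℕ} (hjN : j < N) :
    coeff j (f.subst g) = ∑ d ∈ range N, coeff d f * coeff j (g ^ d) := by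
  rw [coeff_subst' (HasSubst.of_constantCoeff_zero' hg)]
  refine finsum_eq_sum_of_support_subset _ fun d hd => ?_
  by_contra hdN
  simp only [coe_range, Set.mem_Iio, not_lt] at hdN
  exact hd (by simp only [coeff_pow_eq_zero_of_lt hg (hjN.trans_le hdN), smul_zero])

theorem psComp_eq_subst {g : R⟦X⟧} (hg : constantCoeff g = 0) (f : R⟦X⟧) :
    psComp g f = f.subst g := by
  ext j
  rw [coeff_subst_eq_sum_range hg f j.lt_succ_self, psComp, coeff_mk]

-- `E - E(0)` has a compositional inverse.
theorem eq_of_subst_eq_subst {E : R⟦X⟧} (hE : IsUnit (coeff 1 E)) {a b : R⟦X⟧}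
    (ha : HasSubst a) (hb : HasSubst b) (h : E.subst a = E.subst b) : a = b := by
  set P := E - C (constantCoeff E)
  have hP0 : constantCoeff P = 0 := by simp [P]
  have hP1 : IsUnit (coeff 1 P) := by simpa [P, coeff_C] using hE
  have hPab : P.subst a = P.subst b := by
    simp only [P, subst_sub ha, subst_sub hb, h, subst_C]
  have key (c : R⟦X⟧) (hc : HasSubst c) : (P.substInvOfIsUnit hP1).subst (P.subst c) = c := by
    rw [← subst_comp_subst_apply (HasSubst.of_constantCoeff_zero' hP0) hc,
      subst_substInvOfIsUnit_left P hP0 hP1, subst_X hc]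
  rw [← key a ha, hPab, key b hb]

end Subst

theorem coeff_one_artinHasse (p : ℕ) : coeff 1 (artinHasse p) = 1 := by
  simp [artinHasse, psComp, lseries, sum_range_succ, coeff_exp,
    show ∃ i : ℕ, 1 = p ^ i from ⟨0, rfl⟩]

section PiFamily

variable {p : ℕ} [Fact p.Prime] {Ep : ℤ_[p]⟦X⟧} {πfam : ℕ → ℤ_[p]⟦X⟧}

theorem IsArtinHasseZp.coeff_one (hEp : IsArtinHasseZp p Ep) : coeff 1 Ep = 1 := by
  have h := congrArg (coeff 1) hEp
  rw [coeff_map, coeff_map, coeff_one_artinHasse, map_one] at h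
  exact Subtype.ext h

theorem IsPiFamily.hasSubst (hπ : IsPiFamily p Ep πfam) (i : ℕ) : HasSubst (πfam i) :=
  HasSubst.of_constantCoeff_zero' (hπ i).1

theorem IsPiFamily.subst_eq (hπ : IsPiFamily p Ep πfam) (i : ℕ) :
    Ep.subst (πfam i) = (1 + X) ^ p ^ i := by
  rw [← psComp_eq_subst (hπ i).1, (hπ i).2]

theorem IsPiFamily.eq_subst (hE : IsUnit (coeff 1 Ep)) (hπ : IsPiFamily p Ep πfam) (i n : ℕ) :
    πfam (i + n) = (πfam i).subst ((1 + X) ^ p ^ n - 1 : ℤ_[p]⟦X⟧) := by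
  set g : ℤ_[p]⟦X⟧ := (1 + X) ^ p ^ n - 1
  have hg : HasSubst g := HasSubst.of_constantCoeff_zero' (by
    rw [map_sub, map_pow, map_add, map_one, constantCoeff_X, add_zero, one_pow, sub_self])
  refine eq_of_subst_eq_subst hE (IsPiFamily.hasSubst hπ _)
    (by simpa only [coe_substAlgHom] using (IsPiFamily.hasSubst hπ i).comp hg) ?_
  rw [← subst_comp_subst_apply (IsPiFamily.hasSubst hπ i) hg, IsPiFamily.subst_eq hπ,
    IsPiFamily.subst_eq hπ, ← coe_substAlgHom hg, map_pow, map_add, map_one, substAlgHom_X,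
    add_sub_cancel, ← pow_mul, ← pow_add, Nat.add_comm n i]

theorem IsPiFamily.map_toZMod_eq_subst (hE : IsUnit (coeff 1 Ep)) (hπ : IsPiFamily p Ep πfam)
    (i : ℕ) :
    map PadicInt.toZMod (πfam i)
      = (map PadicInt.toZMod (πfam 0)).subst (X ^ p ^ i : (ZMod p)⟦X⟧) := by
  have hsubst (j : ℕ) : HasSubst (map PadicInt.toZMod (πfam j)) :=
    HasSubst.of_constantCoeff_zero' (by rw [← coeff_zero_eq_constantCoeff_apply, coeff_map,
      coeff_zero_eq_constantCoeff_apply, (hπ j).1, map_zero])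
  have hXp : HasSubst (X ^ p ^ i : (ZMod p)⟦X⟧) := HasSubst.X_pow (pow_ne_zero _ (NeZero.ne p))
  have hsubst_map (j : ℕ) :
      (map PadicInt.toZMod Ep).subst (map PadicInt.toZMod (πfam j)) = (1 + X) ^ p ^ j := by
    calc _ = PowerSeries.map PadicInt.toZMod (Ep.subst (πfam j)) :=
          (map_subst (IsPiFamily.hasSubst hπ j) Ep).symm
      _ = (1 + X) ^ p ^ j := by
          rw [IsPiFamily.subst_eq hπ, map_pow, map_add, map_one, map_X]
  have : CharP (ZMod p)⟦X⟧ p := charP_of_injective_algebraMap' (ZMod p) p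
  refine eq_of_subst_eq_subst (E := PowerSeries.map PadicInt.toZMod Ep)
    (by rw [coeff_map]; exact hE.map PadicInt.toZMod) (hsubst i)
    (by simpa only [coe_substAlgHom] using (hsubst 0).comp hXp) ?_
  rw [← subst_comp_subst_apply (hsubst 0) hXp, hsubst_map, hsubst_map, pow_zero, pow_one,
    ← coe_substAlgHom hXp, map_add, map_one, substAlgHom_X, add_pow_char_pow, one_pow]

theorem IsPiFamily.toZMod_coeff_eq_zero (hE : IsUnit (coeff 1 Ep)) (hπ : IsPiFamily p Ep πfam)
    {i j : ℕ} (hij : ¬ p ^ i ∣ j) : PadicInt.toZMod (coeff j (πfam i)) = 0 := by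
  rw [← coeff_map, IsPiFamily.map_toZMod_eq_subst hE hπ,
    coeff_subst_X_pow (pow_ne_zero _ (NeZero.ne p)), if_neg hij]

end PiFamily

theorem tsum_eq_zero_of_tendsto_sum_range {M : Type*} [AddCommMonoid M] [TopologicalSpace M]
    [T2Space M] {f : ℕ → M} (h : Tendsto (fun N => ∑ j ∈ range N, f j) atTop (𝓝 0)) :
    ∑' j, f j = 0 := by
  by_cases hf : Summable f
  · exact tendsto_nhds_unique hf.hasSum.tendsto_sum_nat h
  · exact tsum_eq_zero_of_not_summable hf

section UltrametricEval

variable {R : Type*} [CommRing R] {K : Type*} [NormedField K] [IsUltrametricDist K]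
  {A : R →+* K}

theorem norm_sum_range_le_of_eval₂_eq_zero (hA : ∀ r, ‖A r‖ ≤ 1) {x : K} (hx : ‖x‖ ≤ 1)
    {P : Polynomial R} (hP : P.eval₂ A x = 0) (M : ℕ) :
    ‖∑ j ∈ range M, A (P.coeff j) * x ^ j‖ ≤ ‖x‖ ^ M := by
  have hsplit := sum_range_add_sum_Ico (fun j => A (P.coeff j) * x ^ j)
    (le_max_left M (P.natDegree + 1))
  rw [← Polynomial.eval₂_eq_sum_range' A ((Nat.lt_succ_self _).trans_le (le_max_right _ _)),
    hP] at hsplit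
  rw [eq_neg_of_add_eq_zero_left hsplit, norm_neg]
  refine IsUltrametricDist.norm_sum_le_of_forall_le_of_nonneg (by positivity) fun j hj => ?_
  rw [norm_mul, norm_pow]
  calc ‖A (P.coeff j)‖ * ‖x‖ ^ j ≤ 1 * ‖x‖ ^ j := by gcongr; exact hA _
    _ ≤ ‖x‖ ^ M := by
      rw [one_mul]; exact pow_le_pow_of_le_one (norm_nonneg _) hx (mem_Ico.mp hj).1

/-- The partial sums of `F(G)(x)` agree, up to terms of size `‖x‖^M`, with the values at `x` of
the polynomials `∑_{d < M} F_d G^d`, which vanish. -/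
theorem tsum_coeff_subst_mul_pow_eq_zero (hA : ∀ r, ‖A r‖ ≤ 1) {x : K} (hx : ‖x‖ < 1)
    {F : R⟦X⟧} (hF : constantCoeff F = 0) {G : Polynomial R} (hG : G.coeff 0 = 0)
    (hGx : G.eval₂ A x = 0) :
    ∑' j, A (coeff j (F.subst (G : R⟦X⟧))) * x ^ j = 0 := by
  refine tsum_eq_zero_of_tendsto_sum_range (squeeze_zero_norm (fun M => ?_)
    (tendsto_pow_atTop_nhds_zero_of_lt_one (norm_nonneg _) hx))
  set P : Polynomial R := ∑ d ∈ range M, Polynomial.C (coeff d F) * G ^ d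
  have hP : P.eval₂ A x = 0 := by
    simp only [P, Polynomial.eval₂_finsetSum, Polynomial.eval₂_mul, Polynomial.eval₂_C,
      Polynomial.eval₂_pow, hGx]
    refine sum_eq_zero fun d _ => ?_
    rcases d with _ | d
    · rw [coeff_zero_eq_constantCoeff_apply, hF, map_zero, zero_mul]
    · rw [zero_pow d.succ_ne_zero, mul_zero]
  have hcoeff : ∀ j ∈ range M, coeff j (F.subst (G : R⟦X⟧)) = P.coeff j := fun j hj => by
    rw [coeff_subst_eq_sum_range (by rw [Polynomial.constantCoeff_coe, hG]) F (mem_range.mp hj)]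
    simp only [P, Polynomial.finsetSum_coeff, Polynomial.coeff_C_mul, ← Polynomial.coe_pow,
      Polynomial.coeff_coe]
  rw [sum_congr rfl fun j hj => by rw [hcoeff j hj]]
  exact norm_sum_range_le_of_eval₂_eq_zero hA hx.le hP M

theorem norm_one_sub_pow_le {x : K} (hx : ‖x‖ ≤ 1) (a : ℕ) : ‖1 - x ^ a‖ ≤ ‖1 - x‖ := by
  rw [← mul_neg_geom_sum, norm_mul]
  refine mul_le_of_le_one_right (norm_nonneg _) ?_
  refine IsUltrametricDist.norm_sum_le_of_forall_le_of_nonneg zero_le_one fun i _ => ?_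
  rw [norm_pow]
  exact pow_le_one₀ (norm_nonneg _) hx

theorem IsPrimitiveRoot.norm_sub_one_pow_totient {p : ℕ} [Fact p.Prime] {n : ℕ} (hn : n ≠ 0)
    {ζ : K} (hζ : IsPrimitiveRoot ζ (p ^ n)) : ‖ζ - 1‖ ^ (p ^ n).totient = ‖(p : K)‖ := by
  have : NeZero (p ^ n) := ⟨pow_ne_zero _ (NeZero.ne p)⟩
  have norm_eq_one {η : K} (hη : η ^ p ^ n = 1) : ‖η‖ = 1 :=
    (pow_eq_one_iff_of_nonneg (norm_nonneg η) (NeZero.ne _)).mp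
      (by rw [← norm_pow, hη, norm_one])
  have hconj : ∀ η ∈ primitiveRoots (p ^ n) K, ‖1 - η‖ = ‖1 - ζ‖ := fun η hη => by
    rw [mem_primitiveRoots (Nat.pos_of_ne_zero (NeZero.ne _))] at hη
    obtain ⟨a, -, rfl⟩ := hζ.eq_pow_of_pow_eq_one hη.pow_eq_one
    obtain ⟨b, -, hb⟩ := hη.eq_pow_of_pow_eq_one hζ.pow_eq_one
    refine le_antisymm (norm_one_sub_pow_le (norm_eq_one hζ.pow_eq_one).le a) ?_
    conv_lhs => rw [← hb]
    exact norm_one_sub_pow_le (norm_eq_one hη.pow_eq_one).le b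
  have hprod : ∏ η ∈ primitiveRoots (p ^ n) K, (1 - η) = p := by
    have h := congrArg (Polynomial.eval 1) (Polynomial.cyclotomic_eq_prod_X_sub_primitiveRoots hζ)
    obtain ⟨k, rfl⟩ := Nat.exists_eq_succ_of_ne_zero hn
    rw [Polynomial.eval_one_cyclotomic_prime_pow, Polynomial.eval_prod] at h
    simpa using h.symm
  rw [← hprod, norm_prod, prod_congr rfl hconj, prod_const, hζ.card_primitiveRoots, norm_sub_rev]

end UltrametricEval

section Valuation

variable {K : Type*} [NormedField K] {v : K → WithTop ℚ}

theorem isUltrametricDist_of_valuation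
    (hvadd : ∀ y z : K, min (v y) (v z) ≤ v (y + z))
    (hvnorm : ∀ y z : K, v y ≤ v z ↔ ‖z‖ ≤ ‖y‖) : IsUltrametricDist K :=
  IsUltrametricDist.isUltrametricDist_of_forall_norm_add_le_max_norm fun y z => by
    rcases le_total (v y) (v z) with h | h
    · exact le_max_of_le_left ((hvnorm _ _).mp (by simpa [h] using hvadd y z))
    · exact le_max_of_le_right ((hvnorm _ _).mp (by simpa [h] using hvadd y z))

theorem v_pow (hv0 : ∀ y : K, v y = ⊤ ↔ y = 0) (hvmul : ∀ y z : K, v (y * z) = v y + v z)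
    (y : K) (k : ℕ) : v (y ^ k) = k • v y := by
  have hv1 : v 1 = 0 := by
    obtain ⟨q, hq⟩ := WithTop.ne_top_iff_exists.mp (mt (hv0 1).mp one_ne_zero)
    have h := hvmul 1 1
    rw [one_mul, ← hq, ← WithTop.coe_add, WithTop.coe_inj] at h
    rw [← hq, show q = 0 by linarith]
    rfl
  induction k with
  | zero => rw [pow_zero, zero_smul, hv1]
  | succ k ih => rw [pow_succ, hvmul, ih, succ_nsmul]

theorem div_le_mul_v_of_norm_le_rpow (hv0 : ∀ y : K, v y = ⊤ ↔ y = 0)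
    (hvmul : ∀ y z : K, v (y * z) = v y + v z) (hvnorm : ∀ y z : K, v y ≤ v z ↔ ‖z‖ ≤ ‖y‖)
    {p : ℕ} (hvp : v (p : K) = 1) {a b c : ℕ} (hb : 0 < b) (hc : 0 < c) {t : ℝ} (ht : 0 ≤ t)
    (htc : t ^ c = ‖(p : K)‖) {y : K} (hy : ‖y‖ ≤ t ^ ((a : ℝ) / b)) :
    (((a : ℚ) / b : ℚ) : WithTop ℚ) ≤ ((c : ℚ) : WithTop ℚ) * v y := by
  have hnorm : ‖y ^ (b * c)‖ ≤ ‖(p : K) ^ a‖ := by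
    have hyb : ‖y‖ ^ b ≤ t ^ a := by
      calc ‖y‖ ^ b ≤ (t ^ ((a : ℝ) / b)) ^ b := by gcongr
        _ = t ^ a := by
          rw [← Real.rpow_natCast, ← Real.rpow_mul ht, div_mul_cancel₀ _ (by positivity),
            Real.rpow_natCast]
    rw [norm_pow, norm_pow, ← htc, pow_mul, ← pow_mul t c a, mul_comm c a, pow_mul]
    gcongr
  have key := (hvnorm _ _).mpr hnorm
  rw [v_pow hv0 hvmul, v_pow hv0 hvmul, hvp] at key
  cases h : v y with
  | top => rw [WithTop.mul_top (by exact_mod_cast hc.ne')]; exact le_top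
  | coe s =>
    rw [h, ← WithTop.coe_one, ← WithTop.coe_nsmul, ← WithTop.coe_nsmul, WithTop.coe_le_coe,
      nsmul_eq_mul, nsmul_eq_mul, mul_one] at key
    rw [← WithTop.coe_mul, WithTop.coe_le_coe, div_le_iff₀ (by positivity)]
    push_cast at key
    linarith

end Valuation

section Monomial

variable {K : Type*} [NormedField K] {p : ℕ}

-- The exponent is `v(π^u) = (1/δ) ∑ j u(i,j)`.
theorem norm_prod_le_rpow_weight {m dm : ℕ} (hdm : 0 < dm) {t : ℝ} (ht0 : 0 < t) (ht1 : t ≤ 1)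
    {y : ℕ → K} (hy : ∀ i, ‖y i‖ ≤ t ^ p ^ i) (u : Xfrak p m dm →₀ ℕ) :
    ‖u.prod fun x k => y x.1.1 ^ k‖
      ≤ t ^ (((p ^ m * u.sum fun x k => x.1.2 * k : ℕ) : ℝ) / dm) := by
  have hweight :
      p ^ m * (u.sum fun x k => x.1.2 * k) ≤ (∑ x ∈ u.support, p ^ x.1.1 * u x) * dm := by
    rw [Finsupp.sum, mul_sum, sum_mul]
    refine sum_le_sum fun x _ => ?_
    have hx : x.1.2 * p ^ m ≤ dm * p ^ x.1.1 := x.2.1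
    nlinarith
  rw [Finsupp.prod, norm_prod]
  calc ∏ x ∈ u.support, ‖y x.1.1 ^ u x‖ ≤ ∏ x ∈ u.support, t ^ (p ^ x.1.1 * u x) := by
        refine prod_le_prod (fun _ _ => norm_nonneg _) fun x _ => ?_
        rw [norm_pow, pow_mul]
        exact pow_le_pow_left₀ (norm_nonneg _) (hy _) _
    _ = t ^ ((∑ x ∈ u.support, p ^ x.1.1 * u x : ℕ) : ℝ) := by
        rw [prod_pow_eq_pow_sum, Real.rpow_natCast]
    _ ≤ _ := by
        refine Real.rpow_le_rpow_of_exponent_ge ht0 ht1 ?_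
        rw [div_le_iff₀ (by positivity)]
        exact_mod_cast hweight

end Monomial

section Evaluation

variable {p : ℕ} [Fact p.Prime] {K : Type*} [NormedField K] [Algebra ℚ_[p] K]

theorem norm_algebraMap_padicInt_le_one (hiso : ∀ y : ℚ_[p], ‖algebraMap ℚ_[p] K y‖ = ‖y‖)
    (c : ℤ_[p]) : ‖algebraMap ℚ_[p] K (PadicInt.Coe.ringHom c)‖ ≤ 1 := by
  rw [hiso]
  exact c.norm_le_one

theorem norm_algebraMap_padicInt_le_of_toZMod_eq_zero
    (hiso : ∀ y : ℚ_[p], ‖algebraMap ℚ_[p] K y‖ = ‖y‖) {c : ℤ_[p]} (hc : PadicInt.toZMod c = 0) :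
    ‖algebraMap ℚ_[p] K (PadicInt.Coe.ringHom c)‖ ≤ ‖(p : K)‖ := by
  obtain ⟨d, rfl⟩ : (p : ℤ_[p]) ∣ c := by
    rwa [← Ideal.mem_span_singleton, ← PadicInt.maximalIdeal_eq_span_p, ← PadicInt.ker_toZMod]
  rw [map_mul, map_mul, map_natCast, map_natCast, norm_mul]
  exact mul_le_of_le_one_right (norm_nonneg _) (norm_algebraMap_padicInt_le_one hiso d)

theorem norm_natCast_lt_one (hiso : ∀ y : ℚ_[p], ‖algebraMap ℚ_[p] K y‖ = ‖y‖) :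
    ‖(p : K)‖ < 1 := by
  rw [← map_natCast (algebraMap ℚ_[p] K), hiso, Padic.norm_p]
  exact inv_lt_one_of_one_lt₀ (mod_cast (Fact.out : p.Prime).one_lt)

variable [IsUltrametricDist K] {Ep : ℤ_[p]⟦X⟧} {πfam : ℕ → ℤ_[p]⟦X⟧} {ζ : K}

theorem piEval_eq_zero (hE : IsUnit (coeff 1 Ep)) (hπ : IsPiFamily p Ep πfam)
    (hiso : ∀ y : ℚ_[p], ‖algebraMap ℚ_[p] K y‖ = ‖y‖) {n : ℕ} (hζ : ζ ^ p ^ n = 1)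
    (hζ1 : ‖ζ - 1‖ < 1) {i : ℕ} (hni : n ≤ i) : piEval p πfam K ζ i = 0 := by
  obtain ⟨i, rfl⟩ := Nat.exists_eq_add_of_le' hni
  have hG : ((1 + X) ^ p ^ n - 1 : ℤ_[p]⟦X⟧)
      = (((1 + Polynomial.X) ^ p ^ n - 1 : Polynomial ℤ_[p]) : ℤ_[p]⟦X⟧) := by
    push_cast; rfl
  rw [piEval, IsPiFamily.eq_subst hE hπ i n, hG]
  exact tsum_coeff_subst_mul_pow_eq_zero (A := (algebraMap ℚ_[p] K).comp PadicInt.Coe.ringHom)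
    (norm_algebraMap_padicInt_le_one hiso) hζ1 (hπ i).1
    (by simp [Polynomial.coeff_zero_eq_eval_zero]) (by simp [Polynomial.eval₂_pow, hζ])

theorem norm_piEval_le (hE : IsUnit (coeff 1 Ep)) (hπ : IsPiFamily p Ep πfam)
    (hiso : ∀ y : ℚ_[p], ‖algebraMap ℚ_[p] K y‖ = ‖y‖) {n : ℕ} (hn : n ≠ 0) (hζ : ζ ^ p ^ n = 1)
    (hζ1 : ‖ζ - 1‖ < 1) (htc : ‖ζ - 1‖ ^ (p ^ n).totient = ‖(p : K)‖) (i : ℕ) :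
    ‖piEval p πfam K ζ i‖ ≤ ‖ζ - 1‖ ^ p ^ i := by
  set t := ‖ζ - 1‖
  rcases le_or_gt n i with hni | hin
  · rw [piEval_eq_zero hE hπ hiso hζ hζ1 hni, norm_zero]
    positivity
  have hpc : p ^ i ≤ (p ^ n).totient := by
    rw [Nat.totient_prime_pow Fact.out (Nat.pos_of_ne_zero hn)]
    exact (Nat.pow_le_pow_right (NeZero.pos p) (by omega)).trans
      (Nat.le_mul_of_pos_right _ (Nat.sub_pos_of_lt (Fact.out : p.Prime).one_lt))
  refine IsUltrametricDist.norm_tsum_le_of_forall_le_of_nonneg (by positivity) fun j => ?_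
  rw [norm_mul, norm_pow]
  by_cases hdvd : p ^ i ∣ j
  · rcases Nat.eq_zero_or_pos j with rfl | hj
    · rw [coeff_zero_eq_constantCoeff_apply, (hπ i).1, map_zero, map_zero, norm_zero, zero_mul]
      exact pow_nonneg (norm_nonneg _) _
    calc _ ≤ 1 * t ^ j := by gcongr; exact norm_algebraMap_padicInt_le_one hiso _
      _ ≤ t ^ p ^ i := by
        rw [one_mul]; exact pow_le_pow_of_le_one (norm_nonneg _) hζ1.le (Nat.le_of_dvd hj hdvd)
  · calc _ ≤ t ^ (p ^ n).totient * 1 := by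
          rw [htc]
          gcongr
          · exact norm_algebraMap_padicInt_le_of_toZMod_eq_zero hiso
              (IsPiFamily.toZMod_coeff_eq_zero hE hπ hdvd)
          · exact pow_le_one₀ (norm_nonneg _) hζ1.le
      _ ≤ t ^ p ^ i := by rw [mul_one]; exact pow_le_pow_of_le_one (norm_nonneg _) hζ1.le hpc

theorem norm_evn_le (hiso : ∀ y : ℚ_[p], ‖algebraMap ℚ_[p] K y‖ = ‖y‖)
    {m dm : ℕ} (hdm : 0 < dm) {t : ℝ} (ht0 : 0 < t) (ht1 : t ≤ 1)
    (hy : ∀ i, ‖piEval p πfam K ζ i‖ ≤ t ^ p ^ i) {r : MvPowerSeries (Xfrak p m dm) ℤ_[p]}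
    {w : ℕ}
    (hw : ∀ u, MvPowerSeries.coeff u r ≠ 0 → w ≤ u.sum fun x k => x.1.2 * k) :
    ‖evn p m dm πfam K ζ r‖ ≤ t ^ (((p ^ m * w : ℕ) : ℝ) / dm) := by
  refine IsUltrametricDist.norm_tsum_le_of_forall_le_of_nonneg (by positivity) fun u => ?_
  by_cases hu : MvPowerSeries.coeff u r = 0
  · rw [hu, map_zero, map_zero, zero_mul, norm_zero]
    positivity
  rw [norm_mul]
  calc _ ≤ 1 * t ^ (((p ^ m * u.sum fun x k => x.1.2 * k : ℕ) : ℝ) / dm) :=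
        mul_le_mul (norm_algebraMap_padicInt_le_one hiso _)
          (norm_prod_le_rpow_weight hdm ht0 ht1 hy u) (norm_nonneg _) zero_le_one
    _ ≤ _ := by
        rw [one_mul]
        refine Real.rpow_le_rpow_of_exponent_ge ht0 ht1 ?_
        gcongr
        exact hw u hu

end Evaluation

theorem vpin_eq_totient_mul {p : ℕ} [Fact p.Prime] {n : ℕ} (hn : n ≠ 0) {K : Type*}
    (v : K → WithTop ℚ) (y : K) : vpin p n v y = (((p ^ n).totient : ℚ) : WithTop ℚ) * v y := by
  rw [vpin, Nat.totient_prime_pow Fact.out (Nat.pos_of_ne_zero hn), Nat.cast_mul, Nat.cast_pow,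
    Nat.cast_sub (Fact.out : p.Prime).one_le, Nat.cast_one]

end ArtinHasseEval

open ArtinHasseEval

theorem statement15_general (p m dm : ℕ) [Fact p.Prime] (hdm : 1 ≤ dm)
    (Ep : PowerSeries ℤ_[p]) (hEp : IsArtinHasseZp p Ep)
    (πfam : ℕ → PowerSeries ℤ_[p]) (hπ : IsPiFamily p Ep πfam)
    (n : ℕ) (hn : 1 ≤ n)
    (K : Type*) [NormedField K] [Algebra ℚ_[p] K]
    (hiso : ∀ y : ℚ_[p], ‖algebraMap ℚ_[p] K y‖ = ‖y‖)
    (ζ : K) (hζ : IsPrimitiveRoot ζ (p ^ n))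
    (v : K → WithTop ℚ)
    (hv0 : ∀ y : K, v y = ⊤ ↔ y = 0)
    (hvmul : ∀ y z : K, v (y * z) = v y + v z)
    (hvadd : ∀ y z : K, min (v y) (v z) ≤ v (y + z))
    (hvp : v ((p : K)) = 1)
    (hvnorm : ∀ y z : K, v y ≤ v z ↔ ‖z‖ ≤ ‖y‖)
    (r : MvPowerSeries (Xfrak p m dm) ℤ_[p]) :
    vR p m dm r ≤ vpin p n v (evn p m dm πfam K ζ r) := by
  have : IsUltrametricDist K := isUltrametricDist_of_valuation hvadd hvnorm
  have hE : IsUnit (coeff 1 Ep) := by rw [IsArtinHasseZp.coeff_one hEp]; exact isUnit_one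
  have htc := hζ.norm_sub_one_pow_totient (by omega)
  have hc : 0 < (p ^ n).totient := Nat.totient_pos.mpr (pow_pos (NeZero.pos p) n)
  have ht1 : ‖ζ - 1‖ < 1 :=
    (pow_lt_one_iff_of_nonneg (norm_nonneg _) hc.ne').mp (htc ▸ norm_natCast_lt_one hiso)
  have ht0 : 0 < ‖ζ - 1‖ := norm_pos_iff.mpr <| sub_ne_zero.mpr <|
    hζ.ne_one (Nat.one_lt_pow (by omega) (Fact.out : p.Prime).one_lt)
  by_cases hr : r = 0
  · simp [hr, vR, evn, vpin_eq_totient_mul (n := n) (by omega), (hv0 0).mpr rfl, WithTop.mul_top,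
      hc.ne']
  rw [vR, if_neg hr, vpin_eq_totient_mul (by omega)]
  have hbound := norm_evn_le hiso hdm ht0 ht1.le
    (norm_piEval_le hE hπ hiso (by omega) hζ.pow_eq_one ht1 htc) (r := r)
    (w := sInf {w | ∃ u : Xfrak p m dm →₀ ℕ, MvPowerSeries.coeff u r ≠ 0 ∧
      w = u.sum fun x k => x.1.2 * k})
    (fun u hu => Nat.sInf_le ⟨u, hu, rfl⟩)
  convert div_le_mul_v_of_norm_le_rpow hv0 hvmul hvnorm hvp hdm hc (norm_nonneg _) htc hbound
    using 3
  push_cast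
  ring

/-- for every integer `n ≥ 1` and every `r ∈ R` one has
`v_{π_n}(ev_n(r)) ≥ v(r)`.  Here `K = ℚ_p(ζ_{p^n})` is given as a complete normed field
isometrically containing `ℚ_p`, generated by a primitive `p^n`-th root of unity `ζ`,
with normalized valuation `v` (`v(p) = 1`) given by its characterizing properties. -/
theorem statement15 (p m dm : ℕ) [Fact p.Prime] (hdm : 1 ≤ dm) (hpdm : ¬ p ∣ dm)
    (Ep : PowerSeries ℤ_[p]) (hEp : IsArtinHasseZp p Ep)
    (πfam : ℕ → PowerSeries ℤ_[p]) (hπ : IsPiFamily p Ep πfam)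
    (n : ℕ) (hn : 1 ≤ n)
    (K : Type*) [NormedField K] [CompleteSpace K] [Algebra ℚ_[p] K]
    (hiso : ∀ y : ℚ_[p], ‖algebraMap ℚ_[p] K y‖ = ‖y‖)
    (ζ : K) (hζ : IsPrimitiveRoot ζ (p ^ n))
    (hKgen : Algebra.adjoin ℚ_[p] ({ζ} : Set K) = ⊤)
    (v : K → WithTop ℚ)
    (hv0 : ∀ y : K, v y = ⊤ ↔ y = 0)
    (hvmul : ∀ y z : K, v (y * z) = v y + v z)
    (hvadd : ∀ y z : K, min (v y) (v z) ≤ v (y + z))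
    (hvp : v ((p : K)) = 1)
    (hvnorm : ∀ y z : K, v y ≤ v z ↔ ‖z‖ ≤ ‖y‖)
    (r : MvPowerSeries (Xfrak p m dm) ℤ_[p]) :
    vR p m dm r ≤ vpin p n v (evn p m dm πfam K ζ r) :=
  statement15_general p m dm hdm Ep hEp πfam hπ n hn K hiso ζ hζ v hv0 hvmul hvadd hvp hvnorm r
end
end
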